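/- arXiv:2404.16433 — 2 statements merged into one kernel-verified Lean document; each statement's English description precedes it below -/
import Mathlib

section
/- Fix β > 1 and k > 0. For every φ ≥ k, ∫_k^φ (1/k^β − 1/μ^β) dμ ≥ (2β/(β−1)²) (1/k^{(β−1)/2} − 1/φ^{(β−1)/2})². -/
theorem stmt_7 (β k φ : ℝ) (hβ : 1 < β) (hk : 0 < k) (hφ : k ≤ φ) :
    (2 * β / (β - 1) ^ 2) * (1 / k ^ ((β - 1) / 2) - 1 / φ ^ ((β - 1) / 2)) ^ 2 ≤
      ∫ μ in k..φ, (1 / k ^ β - 1 / μ ^ β) := by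
  set s : ℝ := (β - 1) / 2 with hs
  have hs0 : 0 < s := by rw [hs]; linarith
  have hβ1 : β - 1 = 2 * s := by rw [hs]; ring
  have hβ0 : (0:ℝ) < β := by linarith
  have hC : 2 * β / (β - 1) ^ 2 = β / (2 * s ^ 2) := by rw [hβ1]; field_simp
  set C : ℝ := β / (2 * s ^ 2) with hCdef
  have hC0 : 0 < C := by positivity
  set D' : ℝ → ℝ := fun x =>
    k ^ (-β) - x ^ (-β) - C * (2 * (k ^ (-s) - x ^ (-s)) * (s * x ^ (-s - 1))) with hD'def
  set D : ℝ → ℝ := fun x =>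
    (x - k) * k ^ (-β) - (x ^ (1 - β) - k ^ (1 - β)) / (1 - β)
      - C * (k ^ (-s) - x ^ (-s)) ^ 2 with hDdef
  -- step 1: the integral equals the explicit formula
  have hI : (∫ μ in k..φ, (1 / k ^ β - 1 / μ ^ β))
      = (φ - k) * k ^ (-β) - (φ ^ (1 - β) - k ^ (1 - β)) / (1 - β) := by
    have hcongr : ∀ μ ∈ Set.uIcc k φ, 1 / k ^ β - 1 / μ ^ β = k ^ (-β) - μ ^ (-β) := by
      intro μ hμ
      rw [Set.uIcc_of_le hφ] at hμ
      have hμ0 : 0 < μ := lt_of_lt_of_le hk hμ.1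
      rw [Real.rpow_neg hk.le, Real.rpow_neg hμ0.le, one_div, one_div]
    have h0 : (0:ℝ) ∉ Set.uIcc k φ := by
      rw [Set.uIcc_of_le hφ]
      intro h
      exact absurd h.1 (not_le.mpr hk)
    rw [intervalIntegral.integral_congr hcongr,
      intervalIntegral.integral_sub intervalIntegrable_const
        (intervalIntegral.intervalIntegrable_rpow (Or.inr h0)),
      intervalIntegral.integral_const,
      integral_rpow (Or.inr ⟨by intro h; rw [neg_eq_iff_eq_neg] at h; linarith, h0⟩)]
    rw [show -β + 1 = 1 - β by ring, smul_eq_mul]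
    try ring
  -- derivatives
  have hD : ∀ x : ℝ, 0 < x → HasDerivAt D (D' x) x := by
    intro x hx
    have h1 : HasDerivAt (fun y : ℝ => y ^ (1 - β)) ((1 - β) * x ^ (-β)) x := by
      have := Real.hasDerivAt_rpow_const (p := 1 - β) (Or.inl hx.ne')
      rwa [show 1 - β - 1 = -β by ring] at this
    have h2 : HasDerivAt (fun y : ℝ => y ^ (-s)) ((-s) * x ^ (-s - 1)) x :=
      Real.hasDerivAt_rpow_const (Or.inl hx.ne')
    have h3 : HasDerivAt (fun y : ℝ => k ^ (-s) - y ^ (-s)) (0 - (-s) * x ^ (-s - 1)) x :=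
      (hasDerivAt_const x _).sub h2
    have h4 : HasDerivAt (fun y : ℝ => (k ^ (-s) - y ^ (-s)) ^ 2)
        (2 * (k ^ (-s) - x ^ (-s)) ^ 1 * (0 - (-s) * x ^ (-s - 1))) x := by
      exact_mod_cast h3.pow 2
    have h5 : HasDerivAt D
        (1 * k ^ (-β) - ((1 - β) * x ^ (-β)) / (1 - β)
          - C * (2 * (k ^ (-s) - x ^ (-s)) ^ 1 * (0 - (-s) * x ^ (-s - 1)))) x :=
      ((((hasDerivAt_id x).sub_const k).mul_const _).sub
        ((h1.sub_const _).div_const _)).sub (h4.const_mul C)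
    convert h5 using 1
    have hb1 : (1:ℝ) - β ≠ 0 := by intro h; linarith
    field_simp
    try ring
  have hD' : ∀ x : ℝ, 0 < x →
      HasDerivAt D' (2 * C * s * (s + 1) * (k ^ (-s) - x ^ (-s)) * x ^ (-s - 2)) x := by
    intro x hx
    have h1 : HasDerivAt (fun y : ℝ => y ^ (-β)) ((-β) * x ^ (-β - 1)) x :=
      Real.hasDerivAt_rpow_const (Or.inl hx.ne')
    have h2 : HasDerivAt (fun y : ℝ => y ^ (-s)) ((-s) * x ^ (-s - 1)) x :=
      Real.hasDerivAt_rpow_const (Or.inl hx.ne')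
    have h3 : HasDerivAt (fun y : ℝ => y ^ (-s - 1)) ((-s - 1) * x ^ (-s - 2)) x := by
      have := Real.hasDerivAt_rpow_const (p := -s - 1) (Or.inl hx.ne')
      rwa [show -s - 1 - 1 = -s - 2 by ring] at this
    have h4 : HasDerivAt (fun y : ℝ => 2 * (k ^ (-s) - y ^ (-s)) * (s * y ^ (-s - 1)))
        ((2 * (0 - (-s) * x ^ (-s - 1))) * (s * x ^ (-s - 1))
          + (2 * (k ^ (-s) - x ^ (-s))) * (s * ((-s - 1) * x ^ (-s - 2)))) x := by
      exact ((((hasDerivAt_const x _).sub h2).const_mul 2).mul (h3.const_mul s))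
    have h5 : HasDerivAt D'
        (0 - (-β) * x ^ (-β - 1)
          - C * ((2 * (0 - (-s) * x ^ (-s - 1))) * (s * x ^ (-s - 1))
            + (2 * (k ^ (-s) - x ^ (-s))) * (s * ((-s - 1) * x ^ (-s - 2))))) x :=
      ((hasDerivAt_const x _).sub h1).sub (h4.const_mul C)
    convert h5 using 1
    have hPQ : x ^ (-s - 1) * x ^ (-s - 1) = x ^ (-β - 1) := by
      rw [← Real.rpow_add hx]
      congr 1
      linarith
    rw [← hPQ, hCdef]
    field_simp
    ring
  -- D' is nonneg on [k, ∞)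
  have hD'k : D' k = 0 := by
    rw [hD'def]
    simp
  have hD'mono : MonotoneOn D' (Set.Ici k) := by
    apply monotoneOn_of_deriv_nonneg (convex_Ici k)
    · intro x hx
      exact ((hD' x (lt_of_lt_of_le hk hx)).differentiableAt).continuousAt.continuousWithinAt
    · intro x hx
      rw [interior_Ici] at hx
      exact ((hD' x (lt_trans hk hx)).differentiableAt).differentiableWithinAt
    · intro x hx
      rw [interior_Ici] at hx
      have hx0 : 0 < x := lt_trans hk hx
      rw [(hD' x hx0).deriv]
      have hle : x ^ (-s) ≤ k ^ (-s) :=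
        Real.rpow_le_rpow_of_nonpos hk (le_of_lt hx) (by linarith)
      have h1 : (0:ℝ) ≤ k ^ (-s) - x ^ (-s) := by linarith
      have h2 : (0:ℝ) ≤ x ^ (-s - 2) := Real.rpow_nonneg hx0.le _
      positivity
  have hD'nonneg : ∀ x : ℝ, k ≤ x → 0 ≤ D' x := by
    intro x hx
    have := hD'mono (Set.self_mem_Ici) (Set.mem_Ici.mpr hx) hx
    rwa [hD'k] at this
  -- D is monotone on [k, ∞)
  have hDmono : MonotoneOn D (Set.Ici k) := by
    apply monotoneOn_of_deriv_nonneg (convex_Ici k)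
    · intro x hx
      exact ((hD x (lt_of_lt_of_le hk hx)).differentiableAt).continuousAt.continuousWithinAt
    · intro x hx
      rw [interior_Ici] at hx
      exact ((hD x (lt_trans hk hx)).differentiableAt).differentiableWithinAt
    · intro x hx
      rw [interior_Ici] at hx
      rw [(hD x (lt_trans hk hx)).deriv]
      exact hD'nonneg x (le_of_lt hx)
  have hDk : D k = 0 := by
    rw [hDdef]
    simp
  have hkey : 0 ≤ D φ := by
    have := hDmono (Set.self_mem_Ici) (Set.mem_Ici.mpr hφ) hφ
    rwa [hDk] at this
  -- conclude
  rw [hDdef] at hkey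
  simp only [] at hkey
  rw [hI, hC]
  have hφ0 : 0 < φ := lt_of_lt_of_le hk hφ
  have e1 : 1 / k ^ s = k ^ (-s) := by rw [Real.rpow_neg hk.le, one_div]
  have e2 : 1 / φ ^ s = φ ^ (-s) := by rw [Real.rpow_neg hφ0.le, one_div]
  rw [e1, e2]
  linarith
end

section
/- Fix k > 0. For every φ ≥ k, ∫_k^φ (ln μ − ln k) dμ ≥ 2 (√φ − √k)². -/
/-!
Applying `log x ≤ x - 1` to `x = √(k/μ)` gives the pointwise bound
`log μ - log k ≥ 2 (1 - √k / √μ)`, and the right-hand side has the antiderivative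
`2μ - 4√k √μ`, whose increment over `[k, φ]` is exactly `2 (√φ - √k)²`.
-/

open Real Set intervalIntegral

lemma two_mul_one_sub_sqrt_div_sqrt_le_log_sub_log {a b : ℝ} (ha : 0 < a) (hb : 0 < b) :
    2 * (1 - √a / √b) ≤ log b - log a := by
  have h := log_le_sub_one_of_pos (div_pos (sqrt_pos.2 ha) (sqrt_pos.2 hb))
  rw [log_div (sqrt_pos.2 ha).ne' (sqrt_pos.2 hb).ne', log_sqrt ha.le, log_sqrt hb.le] at h
  linarith

lemma hasDerivAt_two_mul_sub_four_mul_sqrt (a : ℝ) {x : ℝ} (hx : 0 < x) :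
    HasDerivAt (fun μ => 2 * μ - 4 * √a * √μ) (2 * (1 - √a / √x)) x := by
  refine (((hasDerivAt_id' x).const_mul 2).sub
    ((hasDerivAt_sqrt hx.ne').const_mul (4 * √a))).congr_deriv ?_
  field_simp
  ring

section PositiveInterval

variable {a b : ℝ} (ha : 0 < a) (hb : 0 < b)
include ha hb

lemma pos_of_mem_uIcc {μ : ℝ} (hμ : μ ∈ uIcc a b) : 0 < μ :=
  (lt_min ha hb).trans_le hμ.1

lemma intervalIntegrable_two_mul_one_sub_sqrt_div_sqrt :
    IntervalIntegrable (fun μ => 2 * (1 - √a / √μ)) MeasureTheory.volume a b := by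
  refine ContinuousOn.intervalIntegrable fun μ hμ => ?_
  have : √μ ≠ 0 := (sqrt_pos.2 (pos_of_mem_uIcc ha hb hμ)).ne'
  fun_prop (disch := exact this)

lemma intervalIntegrable_log_sub_log :
    IntervalIntegrable (fun μ => log μ - log a) MeasureTheory.volume a b := by
  refine ContinuousOn.intervalIntegrable fun μ hμ => ?_
  have : μ ≠ 0 := (pos_of_mem_uIcc ha hb hμ).ne'
  fun_prop (disch := exact this)

lemma integral_two_mul_one_sub_sqrt_div_sqrt :
    ∫ μ in a..b, 2 * (1 - √a / √μ) = 2 * (√b - √a) ^ 2 := by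
  rw [integral_eq_sub_of_hasDerivAt
    (fun μ hμ => hasDerivAt_two_mul_sub_four_mul_sqrt a (pos_of_mem_uIcc ha hb hμ))
    (intervalIntegrable_two_mul_one_sub_sqrt_div_sqrt ha hb)]
  nlinarith [sq_sqrt ha.le, sq_sqrt hb.le]

end PositiveInterval

theorem stmt_8 (k φ : ℝ) (hk : 0 < k) (hφ : k ≤ φ) :
    2 * (Real.sqrt φ - Real.sqrt k) ^ 2 ≤
      ∫ μ in k..φ, (Real.log μ - Real.log k) := by
  have hφ0 : 0 < φ := hk.trans_le hφ
  rw [← integral_two_mul_one_sub_sqrt_div_sqrt hk hφ0]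
  exact integral_mono_on hφ (intervalIntegrable_two_mul_one_sub_sqrt_div_sqrt hk hφ0)
    (intervalIntegrable_log_sub_log hk hφ0) fun μ hμ =>
      two_mul_one_sub_sqrt_div_sqrt_le_log_sub_log hk (hk.trans_le hμ.1)
end
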